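/- arXiv:2105.02221 — 5 statements merged into one kernel-verified Lean document; each statement's English description precedes it below -/
import Mathlib

section
/- For λ, γ > 0 and a fixed vector y ∈ ℝ^m, the minimum of (λ/2)‖A‖_F² + (γ/2)‖x‖₂² over all matrices A ∈ ℝ^{m×n} and vectors x ∈ ℝ^n satisfying A x = y equals √(λγ)·‖y‖₂. -/
/-!
Row-wise Cauchy–Schwarz gives `‖y‖² ≤ ‖A‖_F² ‖x‖²`, and AM–GM gives
`(λ/2)‖A‖_F² + (γ/2)‖x‖² ≥ √(λγ) ‖A‖_F ‖x‖ ≥ √(λγ) ‖y‖`. The bound is attained by the rank-one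
factorization `A = y eⱼᵀ / c`, `x = c eⱼ`, with `c` chosen to balance `λ‖A‖_F² = γ‖x‖²`.
-/
open Matrix

section
variable {m n R : Type*} [Fintype m] [Fintype n]

theorem sum_sq_mulVec_le [CommRing R] [LinearOrder R] [IsStrictOrderedRing R]
    (A : Matrix m n R) (x : n → R) :
    ∑ i, (A *ᵥ x) i ^ 2 ≤ (∑ i, ∑ j, A i j ^ 2) * ∑ j, x j ^ 2 := by
  rw [Finset.sum_mul]
  exact Finset.sum_le_sum fun i _ => Finset.sum_mul_sq_le_sq_mul_sq _ _ _

theorem sum_sq_single [DecidableEq n] [Semiring R] (j : n) (a : R) :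
    ∑ k, Pi.single j a k ^ 2 = a ^ 2 := by
  simp [Pi.single_apply, ite_pow]

theorem exists_mulVec_eq_sum_sq_eq [DecidableEq n] [Field R] (j : n) (y : m → R) {c : R}
    (hc : c ≠ 0) :
    ∃ (A : Matrix m n R) (x : n → R), A *ᵥ x = y ∧
      ∑ i, ∑ k, A i k ^ 2 = (∑ i, y i ^ 2) / c ^ 2 ∧ ∑ k, x k ^ 2 = c ^ 2 := by
  refine ⟨of fun i => Pi.single j (y i / c), Pi.single j c, ?_, ?_, sum_sq_single j c⟩
  · ext i
    simp [hc]
  · simp only [of_apply, sum_sq_single, div_pow, Finset.sum_div]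

end

theorem Real.two_sqrt_mul_le_add {a b : ℝ} (ha : 0 ≤ a) (hb : 0 ≤ b) :
    2 * √(a * b) ≤ a + b := by
  rw [Real.sqrt_mul ha]
  nlinarith [sq_nonneg (√a - √b), Real.sq_sqrt ha, Real.sq_sqrt hb]

theorem sqrt_mul_mul_sqrt_le_half_add {l g u v S : ℝ} (hl : 0 ≤ l) (hg : 0 ≤ g) (hu : 0 ≤ u)
    (hv : 0 ≤ v) (hS : S ≤ u * v) :
    √(l * g) * √S ≤ l / 2 * u + g / 2 * v := by
  calc √(l * g) * √S ≤ √(l * g) * √(u * v) := by gcongr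
    _ = √((l * u) * (g * v)) := by rw [← Real.sqrt_mul (by positivity)]; ring_nf
    _ ≤ l / 2 * u + g / 2 * v := by
      linarith [Real.two_sqrt_mul_le_add (mul_nonneg hl hu) (mul_nonneg hg hv)]

theorem half_mul_div_add_half_mul_eq_sqrt_mul {l g S t : ℝ} (hl : 0 ≤ l) (hg : 0 < g)
    (ht : 0 < t) (hbal : g * t ^ 2 = l * S) :
    l / 2 * (S / t) + g / 2 * t = √(l * g) * √S := by
  have hlS : l * S / t = g * t := by rw [div_eq_iff ht.ne']; linear_combination -hbal
  rw [← Real.sqrt_mul (mul_nonneg hl hg.le),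
    show l * g * S = (g * t) ^ 2 by linear_combination -g * hbal, Real.sqrt_sq (by positivity)]
  linear_combination hlS / 2

/-- For `λ, γ > 0` and fixed `y ∈ ℝ^m`, the minimum of
`(λ/2)‖A‖_F² + (γ/2)‖x‖₂²` over `A ∈ ℝ^{m×n}`, `x ∈ ℝ^n` with `A x = y`
equals `√(λγ)·‖y‖₂`. -/
theorem min_regularized_factorization {m n : ℕ} (hn : 0 < n)
    (l g : ℝ) (hl : 0 < l) (hg : 0 < g) (y : Fin m → ℝ) :
    IsLeast
      {r : ℝ | ∃ (A : Matrix (Fin m) (Fin n) ℝ) (x : Fin n → ℝ),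
        A.mulVec x = y ∧
        r = l / 2 * (∑ i, ∑ j, A i j ^ 2) + g / 2 * (∑ j, x j ^ 2)}
      (Real.sqrt (l * g) * Real.sqrt (∑ i, y i ^ 2)) := by
  refine ⟨?_, ?_⟩
  · by_cases hy : y = 0
    · subst hy
      exact ⟨0, 0, by simp, by simp⟩
    have hS : 0 < ∑ i, y i ^ 2 := by
      obtain ⟨i, hi⟩ := Function.ne_iff.mp hy
      exact Finset.sum_pos' (fun i _ => sq_nonneg (y i))
        ⟨i, Finset.mem_univ i, sq_pos_of_ne_zero hi⟩
    set t := √(l * (∑ i, y i ^ 2) / g)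
    have ht : 0 < t := Real.sqrt_pos.2 (by positivity)
    obtain ⟨A, x, hAx, hA, hx⟩ :=
      exists_mulVec_eq_sum_sq_eq (⟨0, hn⟩ : Fin n) y (Real.sqrt_pos.2 ht).ne'
    rw [Real.sq_sqrt ht.le] at hA hx
    refine ⟨A, x, hAx, ?_⟩
    rw [hA, hx]
    refine (half_mul_div_add_half_mul_eq_sqrt_mul hl.le hg ht ?_).symm
    rw [Real.sq_sqrt (by positivity)]
    field_simp
  · rintro r ⟨A, x, rfl, rfl⟩
    exact sqrt_mul_mul_sqrt_le_half_add hl.le hg.le (by positivity) (by positivity)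
      (sum_sq_mulVec_le A x)
end

section
/- With the setup of the previous statement, if additionally σ_min(E[h(x)h(x)ᵀ]) ≥ c₁ > 0 and σ_max(E[h*(x)h*(x)ᵀ]) ≤ c₂, then the infimum of v ↦ E[(h(x)ᵀv - h*(x)ᵀv*)²] is achieved at a point v with ‖v‖₂ ≤ ‖v*‖₂·√(c₂/c₁). -/
/-!
The objective is the quadratic `f u = uᵀ F_hh u - 2 bᵀu + v*ᵀ F_ss v*` with `b = F_shᵀ v*`.
The bound `c₁` makes `F_hh` positive definite, so `v = F_hh⁻¹ b` solves the normal equations and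
`f u - f v = (u - v)ᵀ F_hh (u - v) ≥ 0`. Moreover `f v = v*ᵀ F_ss v* - vᵀ F_hh v ≥ 0`, whence
`c₁ ‖v‖² ≤ vᵀ F_hh v ≤ v*ᵀ F_ss v* ≤ c₂ ‖v*‖²`.
-/

open MeasureTheory Matrix

variable {ι κ : Type*}

noncomputable def crossMoment {X : Type*} [MeasurableSpace X] (μ : Measure X)
    (f : X → ι → ℝ) (g : X → κ → ℝ) : Matrix ι κ ℝ :=
  of fun i j => ∫ x, f x i * g x j ∂μ

theorem isHermitian_crossMoment_self {X : Type*} [MeasurableSpace X] (μ : Measure X)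
    (f : X → ι → ℝ) : (crossMoment μ f f).IsHermitian := by
  ext i j
  simp only [crossMoment, conjTranspose_apply, of_apply, star_trivial, mul_comm]

variable [Fintype ι] [Fintype κ]

namespace Matrix

theorem PosSemidef.quadForm_sub_le_of_mulVec_eq {A : Matrix ι ι ℝ} (hA : A.PosSemidef)
    {b v : ι → ℝ} (hv : A *ᵥ v = b) (u : ι → ℝ) :
    v ⬝ᵥ A *ᵥ v - 2 * (b ⬝ᵥ v) ≤ u ⬝ᵥ A *ᵥ u - 2 * (b ⬝ᵥ u) := by
  have hsymm : ∀ x y : ι → ℝ, x ⬝ᵥ A *ᵥ y = y ⬝ᵥ A *ᵥ x := fun x y => by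
    rw [dotProduct_mulVec, ← mulVec_transpose, ← conjTranspose_eq_transpose_of_trivial,
      hA.isHermitian.eq, dotProduct_comm]
  have hnonneg := hA.dotProduct_mulVec_nonneg (u - v)
  subst hv
  rw [star_trivial, mulVec_sub, dotProduct_sub, sub_dotProduct, sub_dotProduct, hsymm v u]
    at hnonneg
  rw [dotProduct_comm _ u, dotProduct_comm _ v]
  linarith

theorem posDef_of_mul_sum_sq_le {A : Matrix ι ι ℝ} (hA : A.IsHermitian) {c : ℝ} (hc : 0 < c)
    (h : ∀ u : ι → ℝ, c * ∑ i, u i ^ 2 ≤ u ⬝ᵥ A *ᵥ u) : A.PosDef := by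
  refine PosDef.of_dotProduct_mulVec_pos hA fun u hu => ?_
  obtain ⟨i, hi⟩ := Function.ne_iff.mp hu
  have hsum : 0 < ∑ i, u i ^ 2 :=
    Finset.sum_pos' (fun j _ => sq_nonneg _) ⟨i, Finset.mem_univ i, pow_two_pos_of_ne_zero hi⟩
  simpa using (mul_pos hc hsum).trans_le (h u)

theorem PosDef.mulVec_inv_mulVec [DecidableEq ι] {A : Matrix ι ι ℝ} (hA : A.PosDef)
    (b : ι → ℝ) : A *ᵥ (A⁻¹ *ᵥ b) = b := by
  rw [mulVec_mulVec, mul_nonsing_inv _ ((isUnit_iff_isUnit_det A).mp hA.isUnit), one_mulVec]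

end Matrix

theorem dotProduct_mul_dotProduct (a u : ι → ℝ) (c w : κ → ℝ) :
    (a ⬝ᵥ u) * (c ⬝ᵥ w) = ∑ i, ∑ j, u i * (a i * c j) * w j := by
  simp only [dotProduct, Finset.sum_mul_sum]
  exact Finset.sum_congr rfl fun i _ => Finset.sum_congr rfl fun j _ => by ring

section CrossMoment

variable {X : Type*} [MeasurableSpace X] {μ : Measure X} {f : X → ι → ℝ} {g : X → κ → ℝ}

theorem integrable_dotProduct_mul_dotProduct
    (hfg : ∀ i j, Integrable (fun x => f x i * g x j) μ) (u : ι → ℝ) (w : κ → ℝ) :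
    Integrable (fun x => (f x ⬝ᵥ u) * (g x ⬝ᵥ w)) μ := by
  simp only [dotProduct_mul_dotProduct]
  exact integrable_finsetSum _ fun i _ => integrable_finsetSum _ fun j _ =>
    ((hfg i j).const_mul _).mul_const _

theorem integral_dotProduct_mul_dotProduct
    (hfg : ∀ i j, Integrable (fun x => f x i * g x j) μ) (u : ι → ℝ) (w : κ → ℝ) :
    ∫ x, (f x ⬝ᵥ u) * (g x ⬝ᵥ w) ∂μ = u ⬝ᵥ crossMoment μ f g *ᵥ w := by
  simp only [dotProduct_mul_dotProduct]
  rw [integral_finsetSum _ fun i _ => integrable_finsetSum _ fun j _ =>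
    ((hfg i j).const_mul _).mul_const _]
  simp only [dotProduct, mulVec, Finset.mul_sum, crossMoment, of_apply]
  refine Finset.sum_congr rfl fun i _ => ?_
  rw [integral_finsetSum _ fun j _ => ((hfg i j).const_mul _).mul_const _]
  refine Finset.sum_congr rfl fun j _ => ?_
  rw [integral_mul_const, integral_const_mul, mul_assoc]

theorem integral_dotProduct_sub_dotProduct_sq
    (hff : ∀ i j, Integrable (fun x => f x i * f x j) μ)
    (hgf : ∀ i j, Integrable (fun x => g x i * f x j) μ)
    (hgg : ∀ i j, Integrable (fun x => g x i * g x j) μ) (u : ι → ℝ) (w : κ → ℝ) :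
    ∫ x, ((f x ⬝ᵥ u) - (g x ⬝ᵥ w)) ^ 2 ∂μ =
      u ⬝ᵥ crossMoment μ f f *ᵥ u - 2 * (w ᵥ* crossMoment μ g f ⬝ᵥ u)
        + w ⬝ᵥ crossMoment μ g g *ᵥ w := by
  have hexpand : ∀ x, ((f x ⬝ᵥ u) - (g x ⬝ᵥ w)) ^ 2 =
      (f x ⬝ᵥ u) * (f x ⬝ᵥ u) - 2 * ((g x ⬝ᵥ w) * (f x ⬝ᵥ u)) + (g x ⬝ᵥ w) * (g x ⬝ᵥ w) :=
    fun x => by ring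
  have iff := integrable_dotProduct_mul_dotProduct hff u u
  have igf := (integrable_dotProduct_mul_dotProduct hgf w u).const_mul 2
  have igg := integrable_dotProduct_mul_dotProduct hgg w w
  simp only [hexpand]
  rw [integral_add (by exact iff.sub igf) igg, integral_sub iff igf, integral_const_mul,
    integral_dotProduct_mul_dotProduct hff, integral_dotProduct_mul_dotProduct hgf,
    integral_dotProduct_mul_dotProduct hgg, dotProduct_mulVec w]

end CrossMoment

theorem sqrt_sum_sq_le_of_mul_le {u w : ι → ℝ} {c₁ c₂ : ℝ} (hc₁ : 0 < c₁)
    (h : c₁ * ∑ i, u i ^ 2 ≤ c₂ * ∑ i, w i ^ 2) :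
    √(∑ i, u i ^ 2) ≤ √(∑ i, w i ^ 2) * √(c₂ / c₁) := by
  rw [← Real.sqrt_mul (Finset.sum_nonneg fun i _ => sq_nonneg (w i))]
  refine Real.sqrt_le_sqrt ?_
  rw [mul_div_assoc', le_div_iff₀ hc₁]
  linarith

theorem inf_linear_approx_achieved_in_ball_general {d k : ℕ}
    (μ : Measure (Fin d → ℝ))
    (h hstar : (Fin d → ℝ) → (Fin k → ℝ))
    (hint : ∀ i j, Integrable (fun x => h x i * h x j) μ)
    (hint' : ∀ i j, Integrable (fun x => hstar x i * hstar x j) μ)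
    (hintc : ∀ i j, Integrable (fun x => hstar x i * h x j) μ)
    (Fhh Fss : Matrix (Fin k) (Fin k) ℝ)
    (hFhh : Fhh = Matrix.of fun i j => ∫ x, h x i * h x j ∂μ)
    (hFss : Fss = Matrix.of fun i j => ∫ x, hstar x i * hstar x j ∂μ)
    (c₁ c₂ : ℝ) (hc₁ : 0 < c₁)
    (hmin : ∀ u : Fin k → ℝ, c₁ * (∑ i, u i ^ 2) ≤ u ⬝ᵥ Fhh.mulVec u)
    (hmax : ∀ u : Fin k → ℝ, u ⬝ᵥ Fss.mulVec u ≤ c₂ * (∑ i, u i ^ 2))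
    (vstar : Fin k → ℝ) :
    ∃ v : Fin k → ℝ,
      Real.sqrt (∑ i, v i ^ 2) ≤ Real.sqrt (∑ i, vstar i ^ 2) * Real.sqrt (c₂ / c₁) ∧
      ∀ u : Fin k → ℝ,
        (∫ x, ((h x ⬝ᵥ v) - (hstar x ⬝ᵥ vstar)) ^ 2 ∂μ) ≤
          ∫ x, ((h x ⬝ᵥ u) - (hstar x ⬝ᵥ vstar)) ^ 2 ∂μ := by
  change Fhh = crossMoment μ h h at hFhh
  change Fss = crossMoment μ hstar hstar at hFss
  have hpd : Fhh.PosDef :=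
    posDef_of_mul_sum_sq_le (hFhh ▸ isHermitian_crossMoment_self μ h) hc₁ hmin
  set b := vstar ᵥ* crossMoment μ hstar h
  set v := Fhh⁻¹ *ᵥ b
  have hv : Fhh *ᵥ v = b := hpd.mulVec_inv_mulVec b
  have hobj : ∀ u, ∫ x, ((h x ⬝ᵥ u) - (hstar x ⬝ᵥ vstar)) ^ 2 ∂μ =
      u ⬝ᵥ Fhh *ᵥ u - 2 * (b ⬝ᵥ u) + vstar ⬝ᵥ Fss *ᵥ vstar := fun u => by
    rw [hFhh, hFss]
    exact integral_dotProduct_sub_dotProduct_sq hint hintc hint' u vstar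
  have hquad : v ⬝ᵥ Fhh *ᵥ v ≤ vstar ⬝ᵥ Fss *ᵥ vstar := by
    have hnonneg : 0 ≤ ∫ x, ((h x ⬝ᵥ v) - (hstar x ⬝ᵥ vstar)) ^ 2 ∂μ :=
      integral_nonneg fun x => sq_nonneg _
    have hbv : b ⬝ᵥ v = v ⬝ᵥ Fhh *ᵥ v := by rw [← hv, dotProduct_comm]
    rw [hobj, hbv] at hnonneg
    linarith
  refine ⟨v, sqrt_sum_sq_le_of_mul_le hc₁ ((hmin v).trans (hquad.trans (hmax vstar))),
    fun u => ?_⟩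
  rw [hobj, hobj]
  linarith [hpd.posSemidef.quadForm_sub_le_of_mulVec_eq hv u]

/-- Under eigenvalue bounds `σ_min(E[h hᵀ]) ≥ c₁ > 0` and `σ_max(E[h* h*ᵀ]) ≤ c₂`,
the infimum of `v ↦ E[(h(x)ᵀv − h*(x)ᵀv*)²]` is achieved at a point `v` with
`‖v‖₂ ≤ ‖v*‖₂·√(c₂/c₁)`. -/
theorem inf_linear_approx_achieved_in_ball {d k : ℕ}
    (μ : Measure (Fin d → ℝ)) [IsProbabilityMeasure μ]
    (h hstar : (Fin d → ℝ) → (Fin k → ℝ))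
    (hmeas : Measurable h) (hmeas' : Measurable hstar)
    (hint : ∀ i j, Integrable (fun x => h x i * h x j) μ)
    (hint' : ∀ i j, Integrable (fun x => hstar x i * hstar x j) μ)
    (hintc : ∀ i j, Integrable (fun x => hstar x i * h x j) μ)
    (Fhh Fss Fsh G : Matrix (Fin k) (Fin k) ℝ)
    (hFhh : Fhh = Matrix.of fun i j => ∫ x, h x i * h x j ∂μ)
    (hFss : Fss = Matrix.of fun i j => ∫ x, hstar x i * hstar x j ∂μ)
    (hFsh : Fsh = Matrix.of fun i j => ∫ x, hstar x i * h x j ∂μ)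
    (hG1 : Fhh * G * Fhh = Fhh) (hG2 : G * Fhh * G = G)
    (hG3 : (Fhh * G)ᵀ = Fhh * G) (hG4 : (G * Fhh)ᵀ = G * Fhh)
    (c₁ c₂ : ℝ) (hc₁ : 0 < c₁) (hc₂ : 0 < c₂)
    (hmin : ∀ u : Fin k → ℝ, c₁ * (∑ i, u i ^ 2) ≤ u ⬝ᵥ Fhh.mulVec u)
    (hmax : ∀ u : Fin k → ℝ, u ⬝ᵥ Fss.mulVec u ≤ c₂ * (∑ i, u i ^ 2))
    (vstar : Fin k → ℝ) :
    ∃ v : Fin k → ℝ,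
      Real.sqrt (∑ i, v i ^ 2) ≤ Real.sqrt (∑ i, vstar i ^ 2) * Real.sqrt (c₂ / c₁) ∧
      ∀ u : Fin k → ℝ,
        (∫ x, ((h x ⬝ᵥ v) - (hstar x ⬝ᵥ vstar)) ^ 2 ∂μ) ≤
          ∫ x, ((h x ⬝ᵥ u) - (hstar x ⬝ᵥ vstar)) ^ 2 ∂μ :=
  inf_linear_approx_achieved_in_ball_general μ h hstar hint hint' hintc Fhh Fss hFhh hFss c₁ c₂ hc₁
    hmin hmax vstar
end

section
/- Let A ∈ ℝ^{d×k} be orthogonal (AᵀA = I_k), v ∈ ℝ^k, δ ∈ ℝ^d, ε > 0. Set B = [A, -A] ∈ ℝ^{d×2k}, w = (1/√(2ε))[v; -v] ∈ ℝ^{2k}, Δ = (1/k)·𝟙δᵀ where 𝟙 ∈ ℝ^{2k} is all-ones. Then for all x ∈ ℝ^d, wᵀσ(Bᵀx) + ⟨x σ'(xᵀB), Δ⟩ = xᵀ((1/√(2ε))A v + δ), where σ(t) = max(t, 0) is applied entrywise and σ'(t) = 1_{t>0}. -/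
open Matrix
open scoped BigOperators

/-- The linearized two-layer ReLU network with parameters `B = [A, -A]`,
`w = (1/√(2ε))[v; -v]`, `Δ = (1/k)𝟙δᵀ` computes the linear function
`x ↦ xᵀ((1/√(2ε))Av + δ)`, at every `x` where no coordinate of `Bᵀx` vanishes. -/
theorem relu_lift_is_linear {d k : ℕ} (hk : 0 < k)
    (A : Matrix (Fin d) (Fin k) ℝ) (hA : Aᵀ * A = 1)
    (v : Fin k → ℝ) (δ : Fin d → ℝ) (ε : ℝ) (hε : 0 < ε)
    (B : Matrix (Fin d) (Fin k ⊕ Fin k) ℝ)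
    (hB : B = Matrix.of fun a j => Sum.elim (fun i => A a i) (fun i => -A a i) j)
    (w : Fin k ⊕ Fin k → ℝ)
    (hw : w = Sum.elim (fun i => v i / Real.sqrt (2 * ε))
                        (fun i => -v i / Real.sqrt (2 * ε)))
    (Δ : Matrix (Fin d) (Fin k ⊕ Fin k) ℝ)
    (hΔ : Δ = Matrix.of fun a _ => δ a / k)
    (x : Fin d → ℝ) (hx : ∀ j, Bᵀ.mulVec x j ≠ 0) :
    (∑ j, w j * max (Bᵀ.mulVec x j) 0) +
      (∑ a, ∑ j, (x a * (if 0 < Bᵀ.mulVec x j then (1 : ℝ) else 0)) * Δ a j) =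
    x ⬝ᵥ ((1 / Real.sqrt (2 * ε)) • A.mulVec v + δ) := by
  have hs : Real.sqrt (2 * ε) ≠ 0 := by positivity
  have hk' : (k : ℝ) ≠ 0 := Nat.cast_ne_zero.2 hk.ne'
  set g : Fin k → ℝ := fun i => ∑ a, A a i * x a with hg
  have hBl : ∀ i : Fin k, Bᵀ.mulVec x (Sum.inl i) = g i := by
    intro i; simp [hB, Matrix.mulVec, dotProduct, hg]
  have hBr : ∀ i : Fin k, Bᵀ.mulVec x (Sum.inr i) = -g i := by
    intro i
    simp [hB, Matrix.mulVec, dotProduct, hg, neg_mul, Finset.sum_neg_distrib]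
  have hgne : ∀ i, g i ≠ 0 := fun i => by
    have := hx (Sum.inl i); rwa [hBl] at this
  -- first sum
  have h1 : (∑ j, w j * max (Bᵀ.mulVec x j) 0)
      = ∑ i, v i / Real.sqrt (2 * ε) * g i := by
    rw [Fintype.sum_sum_type, ← Finset.sum_add_distrib]
    refine Finset.sum_congr rfl fun i _ => ?_
    rw [hBl, hBr, hw]
    simp only [Sum.elim_inl, Sum.elim_inr]
    have := max_zero_sub_max_neg_zero_eq_self (g i)
    linear_combination (v i / Real.sqrt (2 * ε)) * this
  -- second sum
  have h2 : (∑ a, ∑ j, (x a * (if 0 < Bᵀ.mulVec x j then (1 : ℝ) else 0)) * Δ a j)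
      = ∑ a, x a * δ a := by
    refine Finset.sum_congr rfl fun a _ => ?_
    rw [Fintype.sum_sum_type, ← Finset.sum_add_distrib]
    have : ∀ i : Fin k,
        (x a * (if 0 < Bᵀ.mulVec x (Sum.inl i) then (1:ℝ) else 0)) * Δ a (Sum.inl i)
        + (x a * (if 0 < Bᵀ.mulVec x (Sum.inr i) then (1:ℝ) else 0)) * Δ a (Sum.inr i)
        = x a * δ a / k := by
      intro i
      rw [hBl, hBr, hΔ]
      rcases lt_or_gt_of_ne (hgne i) with h | h
      · rw [if_neg (by linarith), if_pos (by linarith)]; simp; ring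
      · rw [if_pos h, if_neg (by linarith)]; simp; ring
    rw [Finset.sum_congr rfl fun i _ => this i]
    rw [Finset.sum_const, Finset.card_univ, Fintype.card_fin, nsmul_eq_mul]
    field_simp
  rw [h1, h2]
  simp only [dotProduct, Pi.add_apply, Pi.smul_apply, smul_eq_mul, Matrix.mulVec, dotProduct]
  have h3 : ∑ i, v i / Real.sqrt (2 * ε) * g i
      = ∑ a, x a * (1 / Real.sqrt (2 * ε) * ∑ i, A a i * v i) := by
    simp only [hg, Finset.mul_sum]
    rw [Finset.sum_comm]
    exact Finset.sum_congr rfl fun a _ => Finset.sum_congr rfl fun i _ => by ring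
  rw [h3, ← Finset.sum_add_distrib]
  exact Finset.sum_congr rfl fun a _ => by ring
end

section
/- Let Σ = diag(εI_{d-k}, I_k) with ε ∈ (0,1), let B* ∈ ℝ^{d×k} be orthogonal with columns in the top (d-k)-coordinate block, and let tasks be θ = (1/√(2ε))B*w + δ with w, δ uniform on unit spheres of ℝ^k and of the bottom-k-coordinate eigenspace E_k respectively. Then for any orthogonal B ∈ ℝ^{d×k}, the expected optimal frozen-representation risk E_{w,δ}[min_v ‖Σ^{1/2}(Bv - θ)‖²] is uniquely minimized over k-dimensional subspaces col(B) by col(B) = E_k, not by col(B*). -/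
open MeasureTheory Matrix
open scoped BigOperators

/-- The weighted squared norm `‖Σ^{1/2}u‖²` for `Σ = diag(ε I_{d−k}, I_k)`. -/
noncomputable def hardQuad {m k : ℕ} (ε : ℝ) (u : Fin m ⊕ Fin k → ℝ) : ℝ :=
  ε * (∑ a : Fin m, u (Sum.inl a) ^ 2) + ∑ a : Fin k, u (Sum.inr a) ^ 2

/-- The population frozen-representation risk of representation `B`, averaged over
tasks `θ = (1/√(2ε))B*w + δ` with `w, δ` uniform on unit spheres. -/
noncomputable def frozenRisk {m k : ℕ} (ε : ℝ)
    (μw μδ : Measure (Fin k → ℝ))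
    (Bstar B : Matrix (Fin m ⊕ Fin k) (Fin k) ℝ) : ℝ :=
  ∫ δc, ∫ w,
    sInf {r : ℝ | ∃ v : Fin k → ℝ,
      r = hardQuad ε (B.mulVec v -
        ((1 / Real.sqrt (2 * ε)) • Bstar.mulVec w +
          fun i => Sum.elim (fun _ => (0 : ℝ)) δc i))} ∂μw ∂μδ

/-!
For a fixed task `θ` the inner minimization is a weighted least-squares problem with value
`θᵀΣθ - bᵀM⁻¹b`, where `M = BᵀΣB` and `b = BᵀΣθ`. Averaging over orthogonally invariant
measures on the spheres, linear terms vanish and `E[w wᵀ] = I/k`, so the risk is a trace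
expression. Writing `B₁` for the top block of `B`, `U` for that of `B*` and `R = 1 - U Uᵀ`,
the identity `tr(M⁻¹M) = k` turns it into
`1/2 + ε/(2k) · (tr(B₁ M⁻¹ B₁ᵀ) + tr(R B₁ M⁻¹ (R B₁)ᵀ))`. Both traces are nonnegative and the
first vanishes only for `B₁ = 0`, i.e. for `col B = E_k`.
-/

namespace Matrix

variable {n p : Type*} [Fintype n] [Fintype p]

lemma dotProduct_mulVec_eq_transpose (A : Matrix p n ℝ) (x : p → ℝ) (y : n → ℝ) :
    x ⬝ᵥ A *ᵥ y = Aᵀ *ᵥ x ⬝ᵥ y := by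
  rw [dotProduct_mulVec, mulVec_transpose]

lemma mulVec_sub_dotProduct_self (A : Matrix p n ℝ) (v : n → ℝ) (y : p → ℝ) :
    (A *ᵥ v - y) ⬝ᵥ (A *ᵥ v - y) = (Aᵀ * A) *ᵥ v ⬝ᵥ v - 2 * (Aᵀ *ᵥ y ⬝ᵥ v) + y ⬝ᵥ y := by
  simp only [sub_dotProduct, dotProduct_sub, dotProduct_mulVec_eq_transpose, ← mulVec_mulVec,
    dotProduct_comm _ y]
  ring

lemma mulVec_mulVec_dotProduct_self (Q : Matrix p p ℝ) (P : Matrix p n ℝ) (w : n → ℝ) :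
    Q *ᵥ P *ᵥ w ⬝ᵥ P *ᵥ w = (Pᵀ * Q * P) *ᵥ w ⬝ᵥ w := by
  rw [← mulVec_mulVec, ← mulVec_mulVec, ← dotProduct_mulVec_eq_transpose]

lemma mulVec_add_dotProduct_self (Q : Matrix p p ℝ) (P : Matrix p n ℝ) (w : n → ℝ) (x : p → ℝ) :
    Q *ᵥ (P *ᵥ w + x) ⬝ᵥ (P *ᵥ w + x)
      = (Pᵀ * Q * P) *ᵥ w ⬝ᵥ w + Pᵀ *ᵥ ((Q + Qᵀ) *ᵥ x) ⬝ᵥ w + Q *ᵥ x ⬝ᵥ x := by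
  have hPx : Q *ᵥ P *ᵥ w ⬝ᵥ x = Pᵀ *ᵥ Qᵀ *ᵥ x ⬝ᵥ w := by
    rw [dotProduct_comm, dotProduct_mulVec_eq_transpose Q, dotProduct_mulVec_eq_transpose P]
  have hxP : Q *ᵥ x ⬝ᵥ P *ᵥ w = Pᵀ *ᵥ Q *ᵥ x ⬝ᵥ w := dotProduct_mulVec_eq_transpose _ _ _
  rw [mulVec_add, add_dotProduct, dotProduct_add, dotProduct_add, mulVec_mulVec_dotProduct_self,
    hPx, hxP, add_mulVec, mulVec_add, add_dotProduct]
  ring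

lemma transpose_mul_self_eq_toRows {m₁ m₂ l : Type*} [Fintype m₁] [Fintype m₂]
    (B : Matrix (m₁ ⊕ m₂) l ℝ) :
    Bᵀ * B = B.toRows₁ᵀ * B.toRows₁ + B.toRows₂ᵀ * B.toRows₂ := by
  conv_lhs => rw [← fromRows_toRows B]
  rw [transpose_fromRows, fromCols_mul_fromRows]

lemma mulVec_dotProduct_eq_sum (A : Matrix n n ℝ) (w : n → ℝ) :
    A *ᵥ w ⬝ᵥ w = ∑ i, ∑ j, A i j * (w j * w i) := by
  simp only [mulVec, dotProduct, Finset.sum_mul, mul_assoc]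

lemma trace_mul_mul_transpose_nonneg {A : Matrix n n ℝ} (hA : A.PosSemidef) (C : Matrix p n ℝ) :
    0 ≤ (C * A * Cᵀ).trace := by
  simpa using (hA.mul_mul_conjTranspose_same C).trace_nonneg

lemma trace_mul_mul_transpose_eq_zero_iff {A : Matrix n n ℝ} (hA : A.PosDef) (C : Matrix p n ℝ) :
    (C * A * Cᵀ).trace = 0 ↔ C = 0 := by
  have hdiag : ∀ i, (C * A * Cᵀ) i i = C i ⬝ᵥ A *ᵥ C i := fun i => by
    rw [mul_apply, dotProduct_mulVec]
    rfl
  refine ⟨fun h => ?_, fun h => by simp [h]⟩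
  simp only [trace, diag, hdiag] at h
  have hrow := (Finset.sum_eq_zero_iff_of_nonneg fun i _ => by
    simpa using hA.posSemidef.dotProduct_mulVec_nonneg (C i)).1 h
  funext i
  by_contra hCi
  exact (hA.dotProduct_mulVec_pos hCi).ne' (by simpa using hrow i (Finset.mem_univ i))

variable [DecidableEq n]

lemma isLeast_quadratic {M : Matrix n n ℝ} (hM : M.PosDef) (b : n → ℝ) (c : ℝ) :
    IsLeast {r | ∃ v, r = M *ᵥ v ⬝ᵥ v - 2 * (b ⬝ᵥ v) + c} (c - M⁻¹ *ᵥ b ⬝ᵥ b) := by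
  set u := M⁻¹ *ᵥ b
  have hMu : M *ᵥ u = b := by
    rw [mulVec_mulVec, mul_nonsing_inv _ hM.det_pos.ne'.isUnit, one_mulVec]
  have hMt : Mᵀ = M := by simpa using hM.isHermitian.eq
  have hsq : ∀ v, M *ᵥ v ⬝ᵥ v - 2 * (b ⬝ᵥ v) + c = (c - u ⬝ᵥ b) + M *ᵥ (v - u) ⬝ᵥ (v - u) := by
    intro v
    have huv : M *ᵥ v ⬝ᵥ u = b ⬝ᵥ v := by
      rw [dotProduct_comm, dotProduct_mulVec_eq_transpose, hMt, hMu]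
    simp only [mulVec_sub, sub_dotProduct, dotProduct_sub, hMu, huv, dotProduct_comm u b]
    ring
  refine ⟨⟨u, by rw [hsq, sub_self, mulVec_zero, zero_dotProduct, add_zero]⟩, ?_⟩
  rintro r ⟨v, rfl⟩
  have := hM.posSemidef.dotProduct_mulVec_nonneg (v - u)
  rw [star_trivial, dotProduct_comm] at this
  linarith [hsq v]

lemma trace_one_sub_mul_transpose_conj [DecidableEq p] (X : Matrix n n ℝ) {U : Matrix n p ℝ}
    (hU : Uᵀ * U = 1) :
    ((1 - U * Uᵀ) * X * (1 - U * Uᵀ)ᵀ).trace = X.trace - (Uᵀ * X * U).trace := by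
  have hR : (1 - U * Uᵀ)ᵀ * (1 - U * Uᵀ) = 1 - U * Uᵀ := by
    simp only [transpose_sub, transpose_one, transpose_mul, transpose_transpose, sub_mul, mul_sub,
      Matrix.one_mul, Matrix.mul_one, Matrix.mul_assoc, ← Matrix.mul_assoc Uᵀ U, hU]
    abel
  rw [trace_mul_cycle, hR, sub_mul, Matrix.one_mul, trace_sub, Matrix.mul_assoc, trace_mul_comm U]

end Matrix

/-- For a probability measure these two properties characterize the uniform distribution on the
unit sphere. -/
structure IsOrthInvariantOnSphere {k : ℕ} (μ : Measure (Fin k → ℝ)) : Prop where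
  ae_sum_sq : ∀ᵐ w ∂μ, ∑ i, w i ^ 2 = 1
  map_mulVec : ∀ O : Matrix (Fin k) (Fin k) ℝ, Oᵀ * O = 1 → μ.map O.mulVec = μ

namespace IsOrthInvariantOnSphere

variable {k : ℕ} {μ : Measure (Fin k → ℝ)}

lemma integral_comp_mulVec (hμ : IsOrthInvariantOnSphere μ) {O : Matrix (Fin k) (Fin k) ℝ}
    (hO : Oᵀ * O = 1) {f : (Fin k → ℝ) → ℝ} (hf : Measurable f) :
    ∫ w, f (O *ᵥ w) ∂μ = ∫ w, f w ∂μ := by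
  conv_rhs => rw [← hμ.map_mulVec O hO]
  rw [integral_map (by fun_prop) (by rw [hμ.map_mulVec O hO]; exact hf.aestronglyMeasurable)]

lemma ae_abs_apply_le_one (hμ : IsOrthInvariantOnSphere μ) : ∀ᵐ w ∂μ, ∀ i, |w i| ≤ 1 := by
  filter_upwards [hμ.ae_sum_sq] with w hw i
  rw [← sq_le_one_iff_abs_le_one, ← hw]
  exact Finset.single_le_sum (f := fun i => w i ^ 2) (fun i _ => sq_nonneg _) (Finset.mem_univ i)

lemma integral_apply (hμ : IsOrthInvariantOnSphere μ) (i : Fin k) : ∫ w, w i ∂μ = 0 := by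
  have h := hμ.integral_comp_mulVec (O := -1) (by simp) (measurable_pi_apply i)
  simp only [neg_mulVec, one_mulVec, Pi.neg_apply, integral_neg] at h
  linarith

/-- Reflecting the `i`-th coordinate flips the sign of `w i * w j`. -/
lemma integral_apply_mul_apply_of_ne (hμ : IsOrthInvariantOnSphere μ) {i j : Fin k}
    (hij : i ≠ j) : ∫ w, w i * w j ∂μ = 0 := by
  let O : Matrix (Fin k) (Fin k) ℝ := diagonal (Pi.single i (-2) + 1)
  have hO : Oᵀ * O = 1 := by
    rw [diagonal_transpose, diagonal_mul_diagonal, ← diagonal_one]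
    congr 1
    ext l
    by_cases h : l = i <;> norm_num [h]
  have h := hμ.integral_comp_mulVec hO (f := fun w => w i * w j) (by fun_prop)
  simp only [O, mulVec_diagonal, Pi.add_apply, Pi.single_eq_same, Pi.single_eq_of_ne' hij,
    Pi.one_apply] at h
  norm_num [integral_neg] at h
  linarith

variable [IsProbabilityMeasure μ]

lemma integrable_apply (hμ : IsOrthInvariantOnSphere μ) (i : Fin k) :
    Integrable (fun w => w i) μ := by
  refine (integrable_const (1 : ℝ)).mono' (measurable_pi_apply i).aestronglyMeasurable ?_
  filter_upwards [hμ.ae_abs_apply_le_one] with w hw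
  exact hw i

lemma integrable_apply_mul_apply (hμ : IsOrthInvariantOnSphere μ) (i j : Fin k) :
    Integrable (fun w => w i * w j) μ := by
  refine (integrable_const (1 : ℝ)).mono' (by fun_prop) ?_
  filter_upwards [hμ.ae_abs_apply_le_one] with w hw
  rw [Real.norm_eq_abs, abs_mul]
  exact mul_le_one₀ (hw i) (abs_nonneg _) (hw j)

/-- Swapping two coordinates shows that all second moments agree; they sum to `1`. -/
lemma integral_apply_mul_self (hμ : IsOrthInvariantOnSphere μ) (i : Fin k) :
    ∫ w, w i * w i ∂μ = 1 / k := by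
  have hswap : ∀ j, ∫ w, w j * w j ∂μ = ∫ w, w i * w i ∂μ := fun j => by
    have h := hμ.integral_comp_mulVec (O := (Equiv.swap i j).permMatrix ℝ)
      (by rw [transpose_permMatrix, ← permMatrix_mul]; simp) (f := fun w => w i * w i) (by fun_prop)
    simpa [permMatrix_mulVec] using h
  have hsum : ∑ j : Fin k, ∫ w, w j * w j ∂μ = 1 := by
    rw [← integral_finsetSum _ fun j _ => hμ.integrable_apply_mul_apply j j,
      integral_congr_ae (hμ.ae_sum_sq.mono fun w hw => by simpa [sq] using hw)]
    simp
  simp only [hswap, Finset.sum_const, Finset.card_univ, Fintype.card_fin, nsmul_eq_mul] at hsum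
  rw [eq_div_iff (by exact_mod_cast i.pos.ne')]
  linarith

lemma integral_apply_mul_apply (hμ : IsOrthInvariantOnSphere μ) (i j : Fin k) :
    ∫ w, w i * w j ∂μ = if i = j then (1 / k : ℝ) else 0 := by
  split_ifs with h
  · subst h; exact hμ.integral_apply_mul_self i
  · exact hμ.integral_apply_mul_apply_of_ne h

lemma integrable_dotProduct (hμ : IsOrthInvariantOnSphere μ) (u : Fin k → ℝ) :
    Integrable (fun w => u ⬝ᵥ w) μ :=
  integrable_finsetSum _ fun i _ => (hμ.integrable_apply i).const_mul (u i)

lemma integral_dotProduct (hμ : IsOrthInvariantOnSphere μ) (u : Fin k → ℝ) :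
    ∫ w, u ⬝ᵥ w ∂μ = 0 := by
  simp only [dotProduct]
  rw [integral_finsetSum _ fun i _ => (hμ.integrable_apply i).const_mul (u i)]
  simp [integral_const_mul, hμ.integral_apply]

lemma integrable_mulVec_dotProduct (hμ : IsOrthInvariantOnSphere μ)
    (A : Matrix (Fin k) (Fin k) ℝ) : Integrable (fun w => A *ᵥ w ⬝ᵥ w) μ := by
  simp only [mulVec_dotProduct_eq_sum]
  exact integrable_finsetSum _ fun i _ => integrable_finsetSum _ fun j _ =>
    (hμ.integrable_apply_mul_apply j i).const_mul _

lemma integral_mulVec_dotProduct (hμ : IsOrthInvariantOnSphere μ)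
    (A : Matrix (Fin k) (Fin k) ℝ) : ∫ w, A *ᵥ w ⬝ᵥ w ∂μ = A.trace / k := by
  simp only [mulVec_dotProduct_eq_sum]
  have hint : ∀ i j, Integrable (fun w : Fin k → ℝ => A i j * (w j * w i)) μ :=
    fun i j => (hμ.integrable_apply_mul_apply j i).const_mul _
  simp_rw [integral_finsetSum _ fun i _ => integrable_finsetSum _ fun j _ => hint i j,
    integral_finsetSum _ fun j _ => hint _ j, integral_const_mul, hμ.integral_apply_mul_apply]
  simp [trace, div_eq_mul_inv, Finset.sum_mul]

lemma integral_dotProduct_self (hμ : IsOrthInvariantOnSphere μ) : ∫ w, w ⬝ᵥ w ∂μ = 1 := by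
  rw [integral_congr_ae (hμ.ae_sum_sq.mono fun w hw => by simpa [dotProduct, sq] using hw)]
  simp

lemma integrable_dotProduct_self (hμ : IsOrthInvariantOnSphere μ) :
    Integrable (fun w => w ⬝ᵥ w) μ :=
  (integrable_const (1 : ℝ)).congr
    (hμ.ae_sum_sq.mono fun w hw => by simpa [dotProduct, sq] using hw.symm)

lemma integrable_mulVec_add_dotProduct (hμ : IsOrthInvariantOnSphere μ) {p : Type*} [Fintype p]
    (Q : Matrix p p ℝ) (P : Matrix p (Fin k) ℝ) (x : p → ℝ) :
    Integrable (fun w => Q *ᵥ (P *ᵥ w + x) ⬝ᵥ (P *ᵥ w + x)) μ := by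
  simp only [mulVec_add_dotProduct_self]
  exact ((hμ.integrable_mulVec_dotProduct _).add (hμ.integrable_dotProduct _)).add
    (integrable_const _)

lemma integral_mulVec_add_dotProduct (hμ : IsOrthInvariantOnSphere μ) {p : Type*} [Fintype p]
    (Q : Matrix p p ℝ) (P : Matrix p (Fin k) ℝ) (x : p → ℝ) :
    ∫ w, Q *ᵥ (P *ᵥ w + x) ⬝ᵥ (P *ᵥ w + x) ∂μ = (Pᵀ * Q * P).trace / k + Q *ᵥ x ⬝ᵥ x := by
  have hint : Integrable (fun w => (Pᵀ * Q * P) *ᵥ w ⬝ᵥ w + Pᵀ *ᵥ ((Q + Qᵀ) *ᵥ x) ⬝ᵥ w) μ :=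
    (hμ.integrable_mulVec_dotProduct _).add (hμ.integrable_dotProduct _)
  simp only [mulVec_add_dotProduct_self]
  rw [integral_add hint (integrable_const _), integral_add (hμ.integrable_mulVec_dotProduct _)
      (hμ.integrable_dotProduct _), hμ.integral_mulVec_dotProduct, hμ.integral_dotProduct]
  simp

end IsOrthInvariantOnSphere

variable {m k : ℕ}

/-- `Bᵀ Σ B` for `Σ = diag(ε I, I)`, written with the two row blocks of `B`. -/
noncomputable def weightedGram (ε : ℝ) (B : Matrix (Fin m ⊕ Fin k) (Fin k) ℝ) :
    Matrix (Fin k) (Fin k) ℝ :=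
  ε • (B.toRows₁ᵀ * B.toRows₁) + B.toRows₂ᵀ * B.toRows₂

lemma weightedGram_posDef {ε : ℝ} (hε : ε ∈ Set.Ioo (0 : ℝ) 1)
    {B : Matrix (Fin m ⊕ Fin k) (Fin k) ℝ} (hB : Bᵀ * B = 1) : (weightedGram ε B).PosDef := by
  have hsplit : weightedGram ε B = ε • 1 + (1 - ε) • (B.toRows₂ᵀ * B.toRows₂) := by
    rw [weightedGram, ← hB, transpose_mul_self_eq_toRows]
    module
  rw [hsplit]
  refine (PosDef.one.smul hε.1).add_posSemidef ((?_ : PosSemidef _).smul (by linarith [hε.2]))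
  simpa using posSemidef_conjTranspose_mul_self B.toRows₂

lemma hardQuad_eq (ε : ℝ) (u : Fin m ⊕ Fin k → ℝ) :
    hardQuad ε u = ε * (u ∘ Sum.inl ⬝ᵥ u ∘ Sum.inl) + u ∘ Sum.inr ⬝ᵥ u ∘ Sum.inr := by
  simp [hardQuad, dotProduct, sq]

lemma hardQuad_mulVec_sub (ε : ℝ) (B : Matrix (Fin m ⊕ Fin k) (Fin k) ℝ) (v : Fin k → ℝ)
    (θ : Fin m ⊕ Fin k → ℝ) :
    hardQuad ε (B *ᵥ v - θ) = weightedGram ε B *ᵥ v ⬝ᵥ v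
      - 2 * ((ε • (B.toRows₁ᵀ *ᵥ (θ ∘ Sum.inl)) + B.toRows₂ᵀ *ᵥ (θ ∘ Sum.inr)) ⬝ᵥ v)
      + hardQuad ε θ := by
  have h₁ : (B *ᵥ v - θ) ∘ Sum.inl = B.toRows₁ *ᵥ v - θ ∘ Sum.inl := by
    ext; simp [mulVec, dotProduct, toRows₁]
  have h₂ : (B *ᵥ v - θ) ∘ Sum.inr = B.toRows₂ *ᵥ v - θ ∘ Sum.inr := by
    ext; simp [mulVec, dotProduct, toRows₂]
  rw [hardQuad_eq, hardQuad_eq, h₁, h₂, mulVec_sub_dotProduct_self, mulVec_sub_dotProduct_self,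
    weightedGram, add_mulVec, smul_mulVec, add_dotProduct, add_dotProduct, smul_dotProduct,
    smul_dotProduct, smul_eq_mul, smul_eq_mul]
  ring

lemma sInf_hardQuad_mulVec_sub {ε : ℝ} {B : Matrix (Fin m ⊕ Fin k) (Fin k) ℝ}
    (hM : (weightedGram ε B).PosDef) (θ : Fin m ⊕ Fin k → ℝ) :
    sInf {r | ∃ v, r = hardQuad ε (B *ᵥ v - θ)} = hardQuad ε θ
      - (weightedGram ε B)⁻¹ *ᵥ (ε • (B.toRows₁ᵀ *ᵥ (θ ∘ Sum.inl)) + B.toRows₂ᵀ *ᵥ (θ ∘ Sum.inr))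
        ⬝ᵥ (ε • (B.toRows₁ᵀ *ᵥ (θ ∘ Sum.inl)) + B.toRows₂ᵀ *ᵥ (θ ∘ Sum.inr)) := by
  simp only [hardQuad_mulVec_sub]
  exact (isLeast_quadratic hM _ _).csInf_eq

lemma trace_toRows₂_mul_inv_weightedGram {ε : ℝ} {B : Matrix (Fin m ⊕ Fin k) (Fin k) ℝ}
    (hM : IsUnit (weightedGram ε B).det) :
    (B.toRows₂ * (weightedGram ε B)⁻¹ * B.toRows₂ᵀ).trace
      = k - ε * (B.toRows₁ * (weightedGram ε B)⁻¹ * B.toRows₁ᵀ).trace := by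
  have h : (weightedGram ε B)⁻¹ * (B.toRows₂ᵀ * B.toRows₂)
      = 1 - ε • ((weightedGram ε B)⁻¹ * (B.toRows₁ᵀ * B.toRows₁)) := by
    rw [eq_sub_iff_add_eq, ← Matrix.mul_smul, ← Matrix.mul_add, add_comm, ← weightedGram,
      nonsing_inv_mul _ hM]
  rw [trace_mul_cycle, trace_mul_comm, h, trace_mul_cycle, trace_mul_comm (B.toRows₁ᵀ * _),
    trace_sub, trace_smul, trace_one, Fintype.card_fin, smul_eq_mul]

lemma sInf_hardQuad_sub_task {ε : ℝ} (hε : 0 < ε) {Bstar B : Matrix (Fin m ⊕ Fin k) (Fin k) ℝ}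
    (hBstar₁ : Bstar.toRows₁ᵀ * Bstar.toRows₁ = 1) (hBstar₂ : Bstar.toRows₂ = 0)
    (hM : (weightedGram ε B).PosDef) (w δ : Fin k → ℝ) :
    sInf {r : ℝ | ∃ v : Fin k → ℝ, r = hardQuad ε (B.mulVec v -
        ((1 / Real.sqrt (2 * ε)) • Bstar.mulVec w + fun i => Sum.elim (fun _ => (0 : ℝ)) δ i))}
      = 1 / 2 * (w ⬝ᵥ w) + δ ⬝ᵥ δ - (weightedGram ε B)⁻¹
          *ᵥ (((ε / Real.sqrt (2 * ε)) • (B.toRows₁ᵀ * Bstar.toRows₁)) *ᵥ w + B.toRows₂ᵀ *ᵥ δ)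
          ⬝ᵥ (((ε / Real.sqrt (2 * ε)) • (B.toRows₁ᵀ * Bstar.toRows₁)) *ᵥ w + B.toRows₂ᵀ *ᵥ δ) := by
  set c := 1 / Real.sqrt (2 * ε)
  set θ : Fin m ⊕ Fin k → ℝ := c • Bstar *ᵥ w + fun i => Sum.elim (fun _ => (0 : ℝ)) δ i
  have hθ₁ : θ ∘ Sum.inl = c • (Bstar.toRows₁ *ᵥ w) := by
    ext a; simp [θ, mulVec, dotProduct, toRows₁]
  have hθ₂ : θ ∘ Sum.inr = δ := by
    ext a
    have : ∀ j, Bstar (Sum.inr a) j = 0 := fun j => congrFun₂ hBstar₂ a j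
    simp [θ, mulVec, dotProduct, this]
  have hc : ε * c ^ 2 = 1 / 2 := by
    rw [div_pow, one_pow, Real.sq_sqrt (by positivity)]; field_simp
  have hU : Bstar.toRows₁ *ᵥ w ⬝ᵥ Bstar.toRows₁ *ᵥ w = w ⬝ᵥ w := by
    rw [dotProduct_mulVec_eq_transpose, mulVec_mulVec, hBstar₁, one_mulVec]
  have hθ : hardQuad ε θ = 1 / 2 * (w ⬝ᵥ w) + δ ⬝ᵥ δ := by
    rw [hardQuad_eq, hθ₁, hθ₂, smul_dotProduct, dotProduct_smul, hU, ← hc]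
    simp only [smul_eq_mul]; ring
  have hb : ε • (B.toRows₁ᵀ *ᵥ (θ ∘ Sum.inl)) + B.toRows₂ᵀ *ᵥ (θ ∘ Sum.inr)
      = ((ε / Real.sqrt (2 * ε)) • (B.toRows₁ᵀ * Bstar.toRows₁)) *ᵥ w + B.toRows₂ᵀ *ᵥ δ := by
    rw [hθ₁, hθ₂, mulVec_smul, smul_mulVec, mulVec_mulVec, smul_smul, mul_one_div]
  rw [sInf_hardQuad_mulVec_sub hM θ, hθ, hb]

/-- The excess risk `frozenRisk - 1/2` divided by `ε / (2k)`. With `U` the top block of `B*`,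
`1 - U Uᵀ` projects the top block onto the orthogonal complement of `col B*`. -/
noncomputable def excessTrace (ε : ℝ) (Bstar B : Matrix (Fin m ⊕ Fin k) (Fin k) ℝ) : ℝ :=
  (B.toRows₁ * (weightedGram ε B)⁻¹ * B.toRows₁ᵀ).trace
    + ((1 - Bstar.toRows₁ * Bstar.toRows₁ᵀ) * B.toRows₁ * (weightedGram ε B)⁻¹
        * ((1 - Bstar.toRows₁ * Bstar.toRows₁ᵀ) * B.toRows₁)ᵀ).trace

lemma frozenRisk_eq_trace {μw μδ : Measure (Fin k → ℝ)} [IsProbabilityMeasure μw]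
    [IsProbabilityMeasure μδ] (hμw : IsOrthInvariantOnSphere μw)
    (hμδ : IsOrthInvariantOnSphere μδ) {ε : ℝ} (hε : ε ∈ Set.Ioo (0 : ℝ) 1)
    {Bstar B : Matrix (Fin m ⊕ Fin k) (Fin k) ℝ}
    (hBstar₁ : Bstar.toRows₁ᵀ * Bstar.toRows₁ = 1) (hBstar₂ : Bstar.toRows₂ = 0)
    (hB : Bᵀ * B = 1) :
    frozenRisk ε μw μδ Bstar B = 3 / 2 - (ε / 2 * (Bstar.toRows₁ᵀ * B.toRows₁
        * (weightedGram ε B)⁻¹ * B.toRows₁ᵀ * Bstar.toRows₁).trace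
      + (B.toRows₂ * (weightedGram ε B)⁻¹ * B.toRows₂ᵀ).trace) / k := by
  unfold frozenRisk
  simp only [sInf_hardQuad_sub_task hε.1 hBstar₁ hBstar₂ (weightedGram_posDef hε hB)]
  set Q := (weightedGram ε B)⁻¹
  set P := (ε / Real.sqrt (2 * ε)) • (B.toRows₁ᵀ * Bstar.toRows₁)
  have hinner : ∀ δ : Fin k → ℝ, ∫ w, 1 / 2 * (w ⬝ᵥ w) + δ ⬝ᵥ δ
        - Q *ᵥ (P *ᵥ w + B.toRows₂ᵀ *ᵥ δ) ⬝ᵥ (P *ᵥ w + B.toRows₂ᵀ *ᵥ δ) ∂μw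
      = 1 / 2 + δ ⬝ᵥ δ - ((Pᵀ * Q * P).trace / k + (B.toRows₂ * Q * B.toRows₂ᵀ) *ᵥ δ ⬝ᵥ δ) := by
    intro δ
    have hconst : Integrable (fun w => 1 / 2 * (w ⬝ᵥ w) + δ ⬝ᵥ δ) μw :=
      (hμw.integrable_dotProduct_self.const_mul _).add (integrable_const _)
    rw [integral_sub hconst (hμw.integrable_mulVec_add_dotProduct _ _ _),
      integral_add (hμw.integrable_dotProduct_self.const_mul _) (integrable_const _),
      integral_const_mul, hμw.integral_dotProduct_self, hμw.integral_mulVec_add_dotProduct,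
      mulVec_mulVec_dotProduct_self, transpose_transpose]
    simp
  have hP : (Pᵀ * Q * P).trace
      = ε / 2 * (Bstar.toRows₁ᵀ * B.toRows₁ * Q * B.toRows₁ᵀ * Bstar.toRows₁).trace := by
    have hs : (ε / Real.sqrt (2 * ε)) ^ 2 = ε / 2 := by
      rw [div_pow, Real.sq_sqrt (by linarith [hε.1])]; field_simp
    simp only [P, transpose_smul, transpose_mul, transpose_transpose, Matrix.smul_mul,
      Matrix.mul_smul, trace_smul, smul_eq_mul, Matrix.mul_assoc]
    rw [← mul_assoc, ← sq, hs]
  have hlin : Integrable (fun δ : Fin k → ℝ => 1 / 2 + δ ⬝ᵥ δ) μδ :=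
    (integrable_const _).add hμδ.integrable_dotProduct_self
  have hquad : Integrable (fun δ : Fin k → ℝ =>
      (Pᵀ * Q * P).trace / k + (B.toRows₂ * Q * B.toRows₂ᵀ) *ᵥ δ ⬝ᵥ δ) μδ :=
    (integrable_const _).add (hμδ.integrable_mulVec_dotProduct _)
  simp only [hinner]
  rw [integral_sub hlin hquad, integral_add (integrable_const _) hμδ.integrable_dotProduct_self,
    integral_add (integrable_const _) (hμδ.integrable_mulVec_dotProduct _),
    hμδ.integral_dotProduct_self, hμδ.integral_mulVec_dotProduct, hP]
  simp only [integral_const, probReal_univ, one_smul]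
  ring

lemma frozenRisk_eq {μw μδ : Measure (Fin k → ℝ)} [IsProbabilityMeasure μw]
    [IsProbabilityMeasure μδ] (hμw : IsOrthInvariantOnSphere μw)
    (hμδ : IsOrthInvariantOnSphere μδ) (hk : 0 < k) {ε : ℝ} (hε : ε ∈ Set.Ioo (0 : ℝ) 1)
    {Bstar B : Matrix (Fin m ⊕ Fin k) (Fin k) ℝ}
    (hBstar₁ : Bstar.toRows₁ᵀ * Bstar.toRows₁ = 1) (hBstar₂ : Bstar.toRows₂ = 0)
    (hB : Bᵀ * B = 1) :
    frozenRisk ε μw μδ Bstar B = 1 / 2 + ε / (2 * k) * excessTrace ε Bstar B := by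
  have hM := weightedGram_posDef hε hB
  have hR :=
    trace_one_sub_mul_transpose_conj (B.toRows₁ * (weightedGram ε B)⁻¹ * B.toRows₁ᵀ) hBstar₁
  have hG := trace_toRows₂_mul_inv_weightedGram hM.det_pos.ne'.isUnit
  simp only [Matrix.mul_assoc] at hR hG
  rw [frozenRisk_eq_trace hμw hμδ hε hBstar₁ hBstar₂ hB, excessTrace]
  simp only [transpose_mul, Matrix.mul_assoc] at hR ⊢
  rw [hG, hR]
  field_simp
  ring

lemma excessTrace_nonneg {ε : ℝ} (hε : ε ∈ Set.Ioo (0 : ℝ) 1)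
    (Bstar : Matrix (Fin m ⊕ Fin k) (Fin k) ℝ) {B : Matrix (Fin m ⊕ Fin k) (Fin k) ℝ}
    (hB : Bᵀ * B = 1) : 0 ≤ excessTrace ε Bstar B :=
  add_nonneg (trace_mul_mul_transpose_nonneg (weightedGram_posDef hε hB).inv.posSemidef _)
    (trace_mul_mul_transpose_nonneg (weightedGram_posDef hε hB).inv.posSemidef _)

lemma excessTrace_eq_zero_iff {ε : ℝ} (hε : ε ∈ Set.Ioo (0 : ℝ) 1)
    (Bstar : Matrix (Fin m ⊕ Fin k) (Fin k) ℝ) {B : Matrix (Fin m ⊕ Fin k) (Fin k) ℝ}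
    (hB : Bᵀ * B = 1) : excessTrace ε Bstar B = 0 ↔ B.toRows₁ = 0 := by
  have hQ := (weightedGram_posDef hε hB).inv
  refine ⟨fun h => ?_, fun h => by simp [excessTrace, h]⟩
  rw [← trace_mul_mul_transpose_eq_zero_iff hQ]
  exact (add_eq_zero_iff_of_nonneg (trace_mul_mul_transpose_nonneg hQ.posSemidef _)
    (trace_mul_mul_transpose_nonneg hQ.posSemidef _)).1 h |>.1

theorem frozenrep_learns_wrong_space_general {m k : ℕ} (hk : 0 < k)
    (ε : ℝ) (hε : ε ∈ Set.Ioo (0 : ℝ) 1)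
    (μw μδ : Measure (Fin k → ℝ))
    [IsProbabilityMeasure μw] [IsProbabilityMeasure μδ]
    -- `μw`, `μδ` are the uniform measures on the unit sphere: they are supported
    -- on the sphere and invariant under every orthogonal transformation
    (hwsph : ∀ᵐ w ∂μw, (∑ i, w i ^ 2) = 1)
    (hδsph : ∀ᵐ δc ∂μδ, (∑ i, δc i ^ 2) = 1)
    (hwrot : ∀ O : Matrix (Fin k) (Fin k) ℝ, Oᵀ * O = 1 →
      Measure.map O.mulVec μw = μw)
    (hδrot : ∀ O : Matrix (Fin k) (Fin k) ℝ, Oᵀ * O = 1 →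
      Measure.map O.mulVec μδ = μδ)
    (Bstar : Matrix (Fin m ⊕ Fin k) (Fin k) ℝ)
    (hBstar : Bstarᵀ * Bstar = 1)
    (hBstarE : ∀ (a : Fin k) (j : Fin k), Bstar (Sum.inr a) j = 0)
    (Bk : Matrix (Fin m ⊕ Fin k) (Fin k) ℝ)
    (hBk : Bk = Matrix.of fun i j =>
      Sum.elim (fun _ => (0 : ℝ)) (fun a => if a = j then (1 : ℝ) else 0) i) :
    ∀ B : Matrix (Fin m ⊕ Fin k) (Fin k) ℝ, Bᵀ * B = 1 →
      frozenRisk ε μw μδ Bstar Bk ≤ frozenRisk ε μw μδ Bstar B ∧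
      (frozenRisk ε μw μδ Bstar B = frozenRisk ε μw μδ Bstar Bk ↔
        ∀ (a : Fin m) (j : Fin k), B (Sum.inl a) j = 0) := by
  intro B hB
  have hBstar₂ : Bstar.toRows₂ = 0 := by ext a j; exact hBstarE a j
  have hBstar₁ : Bstar.toRows₁ᵀ * Bstar.toRows₁ = 1 := by
    simpa [transpose_mul_self_eq_toRows, hBstar₂] using hBstar
  have hBk₁ : Bk.toRows₁ = 0 := by ext a j; simp [hBk]
  have hBk₂ : Bk.toRows₂ = 1 := by ext a j; simp [hBk, one_apply]
  have hBkB : Bkᵀ * Bk = 1 := by simp [transpose_mul_self_eq_toRows, hBk₁, hBk₂]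
  have hμw : IsOrthInvariantOnSphere μw := ⟨hwsph, hwrot⟩
  have hμδ : IsOrthInvariantOnSphere μδ := ⟨hδsph, hδrot⟩
  have hBkRisk : frozenRisk ε μw μδ Bstar Bk = 1 / 2 := by
    rw [frozenRisk_eq hμw hμδ hk hε hBstar₁ hBstar₂ hBkB,
      (excessTrace_eq_zero_iff hε Bstar hBkB).2 hBk₁, mul_zero, add_zero]
  have hscale : 0 < ε / (2 * k) := by have := hε.1; positivity
  have hrows : B.toRows₁ = 0 ↔ ∀ (a : Fin m) (j : Fin k), B (Sum.inl a) j = 0 := by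
    simp [← Matrix.ext_iff]
  rw [hBkRisk, frozenRisk_eq hμw hμδ hk hε hBstar₁ hBstar₂ hB, ← hrows,
    ← excessTrace_eq_zero_iff hε Bstar hB]
  constructor
  · nlinarith [excessTrace_nonneg hε Bstar hB]
  · simp [hscale.ne']

/-- In the linear hard case with `Σ = diag(ε I_{d−k}, I_k)`, tasks
`θ = (1/√(2ε))B*w + δ` (`w`, `δ` uniform on unit spheres, `col B* ⊆ E*`,
`δ ∈ E_k`), the expected optimal frozen-representation risk is uniquely
minimized over `k`-dimensional subspaces `col(B)` by `col(B) = E_k`. -/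
theorem frozenrep_learns_wrong_space {m k : ℕ} (hm : 0 < m) (hk : 0 < k)
    (ε : ℝ) (hε : ε ∈ Set.Ioo (0 : ℝ) 1)
    (μw μδ : Measure (Fin k → ℝ))
    [IsProbabilityMeasure μw] [IsProbabilityMeasure μδ]
    -- `μw`, `μδ` are the uniform measures on the unit sphere: they are supported
    -- on the sphere and invariant under every orthogonal transformation
    (hwsph : ∀ᵐ w ∂μw, (∑ i, w i ^ 2) = 1)
    (hδsph : ∀ᵐ δc ∂μδ, (∑ i, δc i ^ 2) = 1)
    (hwrot : ∀ O : Matrix (Fin k) (Fin k) ℝ, Oᵀ * O = 1 →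
      Measure.map O.mulVec μw = μw)
    (hδrot : ∀ O : Matrix (Fin k) (Fin k) ℝ, Oᵀ * O = 1 →
      Measure.map O.mulVec μδ = μδ)
    (Bstar : Matrix (Fin m ⊕ Fin k) (Fin k) ℝ)
    (hBstar : Bstarᵀ * Bstar = 1)
    (hBstarE : ∀ (a : Fin k) (j : Fin k), Bstar (Sum.inr a) j = 0)
    (Bk : Matrix (Fin m ⊕ Fin k) (Fin k) ℝ)
    (hBk : Bk = Matrix.of fun i j =>
      Sum.elim (fun _ => (0 : ℝ)) (fun a => if a = j then (1 : ℝ) else 0) i) :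
    ∀ B : Matrix (Fin m ⊕ Fin k) (Fin k) ℝ, Bᵀ * B = 1 →
      frozenRisk ε μw μδ Bstar Bk ≤ frozenRisk ε μw μδ Bstar B ∧
      (frozenRisk ε μw μδ Bstar B = frozenRisk ε μw μδ Bstar Bk ↔
        ∀ (a : Fin m) (j : Fin k), B (Sum.inl a) j = 0) :=
  frozenrep_learns_wrong_space_general hk ε hε μw μδ hwsph hδsph hwrot hδrot Bstar hBstar hBstarE Bk
    hBk
end

section
/- For any zero-mean random vector x in ℝ^d with covariance Σ, any matrix B₀ ∈ ℝ^{d×k}, and any θ, v ∈ ℝ^d, if ζ(x) = B₀ᵀx and ξ(x) = x, then ⟨ξ(·)ᵀv, [P_ζ^⊥ξ](·)ᵀθ⟩_{L₂} = E[(vᵀx)·(θᵀ(x - E[x xᵀB₀](B₀ᵀΣB₀)†B₀ᵀx))] = vᵀΣ^{1/2}P^⊥_{Σ^{1/2}B₀}Σ^{1/2}θ, where P^⊥_{Σ^{1/2}B₀} is the projection onto the orthogonal complement of col(Σ^{1/2}B₀). -/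
open MeasureTheory Matrix
open scoped BigOperators

/-- For a zero-mean random vector `x` with covariance `Σ`, with `ζ(x) = B₀ᵀx` and
`ξ(x) = x`, the `L₂` inner product `⟨ξᵀv, (P_ζ^⊥ξ)ᵀθ⟩` equals
`vᵀ Σ^{1/2} P^⊥_{Σ^{1/2}B₀} Σ^{1/2} θ`. -/
theorem linear_projection_operator_eq {d k : ℕ}
    (μ : Measure (Fin d → ℝ)) [IsProbabilityMeasure μ]
    (Sig S : Matrix (Fin d) (Fin d) ℝ)
    -- zero mean, covariance `Σ`, finite second moments
    (hmean : ∀ a, ∫ x, x a ∂μ = 0)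
    (hcov : ∀ a b, ∫ x, x a * x b ∂μ = Sig a b)
    (hint : ∀ a b, Integrable (fun x => x a * x b) μ)
    -- `S = Σ^{1/2}`
    (hSsymm : S.IsSymm) (hSsq : S * S = Sig) (hSpsd : S.PosSemidef)
    (B₀ : Matrix (Fin d) (Fin k) ℝ)
    -- `G` is the Moore–Penrose pseudoinverse of `B₀ᵀ Σ B₀`
    (G : Matrix (Fin k) (Fin k) ℝ)
    (hG1 : (B₀ᵀ * Sig * B₀) * G * (B₀ᵀ * Sig * B₀) = B₀ᵀ * Sig * B₀)
    (hG2 : G * (B₀ᵀ * Sig * B₀) * G = G)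
    (hG3 : ((B₀ᵀ * Sig * B₀) * G)ᵀ = (B₀ᵀ * Sig * B₀) * G)
    (hG4 : (G * (B₀ᵀ * Sig * B₀))ᵀ = G * (B₀ᵀ * Sig * B₀))
    -- `P` is the orthogonal projection onto `col(Σ^{1/2} B₀)`
    (P : Matrix (Fin d) (Fin d) ℝ)
    (hPsymm : P.IsSymm) (hPidem : P * P = P) (hPA : P * (S * B₀) = S * B₀)
    (hPrange : ∀ y : Fin d → ℝ, ∃ z : Fin k → ℝ, P.mulVec y = (S * B₀).mulVec z)
    (v θ : Fin d → ℝ) :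
    (∫ x, (v ⬝ᵥ x) * (θ ⬝ᵥ (x - (Sig * B₀ * G * B₀ᵀ).mulVec x)) ∂μ) =
      v ⬝ᵥ (S * (1 - P) * S).mulVec θ := by
  classical
  set A : Matrix (Fin d) (Fin k) ℝ := S * B₀ with hA
  set C : Matrix (Fin k) (Fin k) ℝ := B₀ᵀ * Sig * B₀ with hC
  have hSt : Sᵀ = S := hSsymm
  have hSigsymm : Sigᵀ = Sig := by rw [← hSsq, transpose_mul, hSt]
  have hAt : Aᵀ = B₀ᵀ * S := by rw [hA, transpose_mul, hSt]
  have hAtA : Aᵀ * A = C := by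
    rw [hAt, hA, hC, Matrix.mul_assoc, ← Matrix.mul_assoc S S B₀, hSsq,
      ← Matrix.mul_assoc]
  have hCsymm : Cᵀ = C := by
    rw [hC, transpose_mul, transpose_mul, transpose_transpose, hSigsymm,
      Matrix.mul_assoc]
  -- associatively-normalized versions of hypotheses
  have hAtA' : ∀ Z : Matrix (Fin k) (Fin k) ℝ, Aᵀ * (A * Z) = C * Z := fun Z => by
    rw [← Matrix.mul_assoc, hAtA]
  have hG1' : C * (G * C) = C := by rw [← Matrix.mul_assoc]; exact hG1
  -- `A * G * C = A`
  have hkey : (A * (G * C) - A)ᵀ * (A * (G * C) - A) = 0 := by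
    rw [transpose_sub, transpose_mul, Matrix.sub_mul, Matrix.mul_sub, Matrix.mul_sub]
    have e0 : Aᵀ * (A * (G * C)) = C := by rw [hAtA', hG1']
    have e1 : (G * C)ᵀ * Aᵀ * (A * (G * C)) = (G * C)ᵀ * C := by
      rw [Matrix.mul_assoc, e0]
    have e2 : (G * C)ᵀ * Aᵀ * A = (G * C)ᵀ * C := by rw [Matrix.mul_assoc, hAtA]
    rw [e0, e1, e2, hAtA, sub_self, sub_self, sub_zero]
  have hAGC : A * (G * C) = A := by
    have h0 : (A * (G * C) - A) = 0 := by
      have := hkey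
      rw [← conjTranspose_eq_transpose_of_trivial] at this
      exact Matrix.conjTranspose_mul_self_eq_zero.mp this
    exact sub_eq_zero.mp h0
  set Q : Matrix (Fin d) (Fin d) ℝ := A * G * Aᵀ with hQ
  have hQA : Q * A = A := by
    rw [hQ, Matrix.mul_assoc (A * G) Aᵀ A, hAtA, Matrix.mul_assoc]
    exact hAGC
  have hPQ : P * Q = Q := by
    rw [hQ, ← Matrix.mul_assoc, ← Matrix.mul_assoc, hPA]
  have hAtP : Aᵀ * P = Aᵀ := by
    have : (P * A)ᵀ = Aᵀ := by rw [hPA]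
    rwa [transpose_mul, hPsymm.eq] at this
  have hQP : Q * P = Q := by
    rw [hQ, Matrix.mul_assoc (A * G) Aᵀ P, hAtP]
  -- P = Q
  have hPeqQ : P = Q := by
    have hvec : ∀ y : Fin d → ℝ, Q.mulVec y = P.mulVec y := by
      intro y
      obtain ⟨z, hz⟩ := hPrange y
      have h1 : Q.mulVec (P.mulVec y) = Q.mulVec y := by
        rw [Matrix.mulVec_mulVec, hQP]
      have h2 : Q.mulVec (P.mulVec y) = P.mulVec y := by
        rw [hz, Matrix.mulVec_mulVec, hQA]
      rw [← h1, h2]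
    ext i j
    have := congrFun (hvec (Pi.single j 1)) i
    simp only [Matrix.mulVec_single_one, mul_one] at this
    exact this.symm
  have hQsymm : Qᵀ = Q := by rw [← hPeqQ, hPsymm.eq]
  -- key matrix identity : Sig * Nᵀ = S * P * S, N = Sig * B₀ * G * B₀ᵀ
  set N : Matrix (Fin d) (Fin d) ℝ := Sig * B₀ * G * B₀ᵀ with hN
  have hNt : Nᵀ = B₀ * Gᵀ * (B₀ᵀ * Sig) := by
    rw [hN]
    simp only [transpose_mul, transpose_transpose, hSigsymm, Matrix.mul_assoc]
  have hQt : Qᵀ = A * Gᵀ * Aᵀ := by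
    rw [hQ, transpose_mul (A * G) Aᵀ, transpose_transpose, transpose_mul A G, ← Matrix.mul_assoc]
  have hSigNt : Sig * Nᵀ = S * P * S := by
    have h5 : S * (A * Gᵀ * Aᵀ) * S = Sig * Nᵀ := by
      rw [hNt, hAt, hA, ← hSsq]
      simp only [Matrix.mul_assoc]
    rw [← h5, ← hQt, hQsymm, ← hPeqQ]
  have hfinal : Sig - Sig * Nᵀ = S * (1 - P) * S := by
    rw [hSigNt, Matrix.mul_sub, Matrix.mul_one, Matrix.sub_mul, hSsq]
  -- now the integral computation
  set w : Fin d → ℝ := θ - Nᵀ.mulVec θ with hw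
  have hint2 : ∀ x : Fin d → ℝ,
      (v ⬝ᵥ x) * (θ ⬝ᵥ (x - N.mulVec x)) = ∑ a, ∑ b, v a * w b * (x a * x b) := by
    intro x
    have h1 : θ ⬝ᵥ (x - N.mulVec x) = w ⬝ᵥ x := by
      rw [hw, sub_dotProduct, dotProduct_sub, Matrix.dotProduct_mulVec,
        Matrix.mulVec_transpose]
    rw [h1]
    simp only [dotProduct, Finset.sum_mul_sum]
    refine Finset.sum_congr rfl fun a _ => Finset.sum_congr rfl fun b _ => by ring
  have hIntgr : ∀ a b : Fin d, Integrable (fun x => v a * w b * (x a * x b)) μ :=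
    fun a b => (hint a b).const_mul _
  calc (∫ x, (v ⬝ᵥ x) * (θ ⬝ᵥ (x - N.mulVec x)) ∂μ)
      = ∫ x, ∑ a, ∑ b, v a * w b * (x a * x b) ∂μ := by
        exact integral_congr_ae (Filter.Eventually.of_forall fun x => hint2 x)
    _ = ∑ a, ∑ b, v a * w b * Sig a b := by
        rw [integral_finset_sum _ (fun a _ => integrable_finset_sum _ (fun b _ => hIntgr a b))]
        refine Finset.sum_congr rfl fun a _ => ?_
        rw [integral_finset_sum _ (fun b _ => hIntgr a b)]
        refine Finset.sum_congr rfl fun b _ => ?_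
        rw [MeasureTheory.integral_const_mul, hcov]
    _ = v ⬝ᵥ Sig.mulVec w := by
        simp only [dotProduct, Matrix.mulVec, Finset.mul_sum]
        refine Finset.sum_congr rfl fun a _ => Finset.sum_congr rfl fun b _ => by ring
    _ = v ⬝ᵥ (S * (1 - P) * S).mulVec θ := by
        congr 1
        rw [hw, Matrix.mulVec_sub, Matrix.mulVec_mulVec, ← Matrix.sub_mulVec, hfinal]
end
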